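/- arXiv:2103.05575 — 2 statements merged into one kernel-verified Lean document; each statement's English description precedes it below -/
import Mathlib

section
/- Let γ > 0, a > 0, p ∈ (10/3, 6], σ = 3(p−2)/2, and suppose A, B, C > 0 satisfy B ≤ K_H √A c^{3/2} and C ≤ K_GN A^{σ/2} c^{(6−p)/4} for some c ∈ (0, c₁), where c₁ is as in the paper. Set t* = (pA/(aσ(σ−1)C))^{1/(σ−2)} and g'(t) = tA − (γ/4)B − (aσ/p)t^{σ−1}C. Then g'(t*) > 0. -/
/-- `σ = 3(p−2)/2`. -/
noncomputable def sig (p : ℝ) : ℝ := 3 * (p - 2) / 2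

/-- The threshold `c₁` of the paper. -/
noncomputable def cOne (p γ a K_H K_GN : ℝ) : ℝ :=
  (4 * (sig p - 2) / (γ * K_H * (sig p - 1))) ^ ((3 * p - 10) / (4 * (p - 3))) *
    (p / (a * sig p * (sig p - 1) * K_GN)) ^ (1 / (2 * (p - 3)))

/-- Lemma 3: if `c ∈ (0, c₁)` and `A, B, C > 0` satisfy the Hardy and
Gagliardo–Nirenberg bounds, then `g'(t*) > 0` at the inflection point
`t* = (pA/(aσ(σ−1)C))^{1/(σ−2)}`. -/
theorem stmt7 (p γ a K_H K_GN c A B C : ℝ) (hγ : 0 < γ) (ha : 0 < a)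
    (hp1 : 10 / 3 < p) (hp2 : p ≤ 6) (hKH : 0 < K_H) (hKGN : 0 < K_GN)
    (hA : 0 < A) (hB : 0 < B) (hC : 0 < C)
    (hc : 0 < c) (hc1 : c < cOne p γ a K_H K_GN)
    (hHardy : B ≤ K_H * Real.sqrt A * c ^ ((3 : ℝ) / 2))
    (hGN : C ≤ K_GN * A ^ (sig p / 2) * c ^ ((6 - p) / 4)) :
    let tstar : ℝ := (p * A / (a * sig p * (sig p - 1) * C)) ^ (1 / (sig p - 2))
    0 < tstar * A - (γ / 4) * B - (a * sig p / p) * tstar ^ (sig p - 1) * C := by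
  intro tstar
  have hsdef : sig p = 3 * (p - 2) / 2 := rfl
  set s : ℝ := sig p with hs
  have hp0 : 0 < p := by linarith
  have hp3 : (3:ℝ) < p := by linarith
  have h310 : 0 < 3 * p - 10 := by linarith
  have h310' : (3 * p - 10 : ℝ) ≠ 0 := h310.ne'
  have hs2 : (2:ℝ) < s := by rw [hsdef]; linarith
  have hs1 : (1:ℝ) < s := by linarith
  have hs0 : (0:ℝ) < s := by linarith
  have hs2' : s - 2 ≠ 0 := by linarith
  have hs1' : s - 1 ≠ 0 := by linarith
  have hs2val : s - 2 = (3 * p - 10) / 2 := by rw [hsdef]; ring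
  have hass1 : 0 < a * s * (s - 1) := mul_pos (mul_pos ha hs0) (by linarith)
  have hden : 0 < a * s * (s - 1) * C := mul_pos hass1 hC
  have hbase : 0 < p * A / (a * s * (s - 1) * C) := div_pos (mul_pos hp0 hA) hden
  have htdef : tstar = (p * A / (a * s * (s - 1) * C)) ^ (1 / (s - 2)) := rfl
  clear_value tstar s
  have htT : 0 < tstar := by rw [htdef]; exact Real.rpow_pos_of_pos hbase _
  -- t*^(s-2) = base
  have hT2 : tstar ^ (s - 2) = p * A / (a * s * (s - 1) * C) := by
    rw [htdef, ← Real.rpow_mul hbase.le, one_div,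
      inv_mul_cancel₀ hs2', Real.rpow_one]
  -- last term identity
  have hlast : (a * s / p) * tstar ^ (s - 1) * C = tstar * A / (s - 1) := by
    have hpw : tstar ^ (s - 1) = tstar ^ (s - 2) * tstar := by
      nth_rewrite 1 [show s - 1 = s - 2 + 1 by ring]
      rw [Real.rpow_add htT, Real.rpow_one]
    rw [hpw, hT2, eq_div_iff hs1']
    field_simp [hp0.ne', ha.ne', hs0.ne', hC.ne', hs1']
  -- abbreviations
  set K : ℝ := p / (a * s * (s - 1) * K_GN) with hKdef
  have hK : 0 < K := div_pos hp0 (mul_pos hass1 hKGN)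
  set X : ℝ := 4 * (s - 2) / (γ * K_H * (s - 1)) with hXdef
  have hX : 0 < X := div_pos (by linarith) (mul_pos (mul_pos hγ hKH) (by linarith))
  clear_value K X
  have hq : 0 < 4 * (p - 3) / (3 * p - 10) := div_pos (by linarith) h310
  -- Step A: c^q < X * K^(1/(s-2))
  have hcq : c ^ (4 * (p - 3) / (3 * p - 10)) < X * K ^ (1 / (s - 2)) := by
    have h := Real.rpow_lt_rpow hc.le hc1 hq
    calc c ^ (4 * (p - 3) / (3 * p - 10))
        < (cOne p γ a K_H K_GN) ^ (4 * (p - 3) / (3 * p - 10)) := h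
      _ = X * K ^ (1 / (s - 2)) := by
          rw [cOne, ← hs, ← hXdef, ← hKdef,
            Real.mul_rpow (Real.rpow_nonneg hX.le _) (Real.rpow_nonneg hK.le _),
            ← Real.rpow_mul hX.le, ← Real.rpow_mul hK.le]
          congr 1
          · rw [show (3 * p - 10) / (4 * (p - 3)) * (4 * (p - 3) / (3 * p - 10)) = 1 by
              rw [div_mul_div_comm, mul_comm (4 * (p - 3)) (3 * p - 10),
                div_self (mul_ne_zero h310' (by positivity : ((4:ℝ)) ≠ 0) |> fun _ => (mul_pos h310 (by linarith : (0:ℝ) < 4 * (p - 3))).ne')],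
              Real.rpow_one]
          · congr 1
            rw [hs2val, one_div_div, div_mul_div_comm,
              div_eq_div_iff (mul_pos (by linarith : (0:ℝ) < 2 * (p - 3)) h310).ne' h310']
            ring
  -- Step B: lower bound for tstar
  have hD : 0 < K_GN * A ^ (s / 2) * c ^ ((6 - p) / 4) :=
    mul_pos (mul_pos hKGN (Real.rpow_pos_of_pos hA _)) (Real.rpow_pos_of_pos hc _)
  have hdenD : 0 < a * s * (s - 1) * (K_GN * A ^ (s / 2) * c ^ ((6 - p) / 4)) :=
    mul_pos hass1 hD
  have hbase2 : 0 < p * A / (a * s * (s - 1) * (K_GN * A ^ (s / 2) * c ^ ((6 - p) / 4))) :=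
    div_pos (mul_pos hp0 hA) hdenD
  have hTlb : (p * A / (a * s * (s - 1) * (K_GN * A ^ (s / 2) * c ^ ((6 - p) / 4)))) ^ (1 / (s - 2))
      ≤ tstar := by
    rw [htdef]
    refine Real.rpow_le_rpow hbase2.le ?_ (one_div_nonneg.mpr (by linarith))
    exact (div_le_div_iff_of_pos_left (mul_pos hp0 hA) hdenD hden).mpr
      (mul_le_mul_of_nonneg_left hGN hass1.le)
  -- base2 decomposition
  have hbase2eq : p * A / (a * s * (s - 1) * (K_GN * A ^ (s / 2) * c ^ ((6 - p) / 4)))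
      = K * A ^ (1 - s / 2) * c ^ (-((6 - p) / 4)) := by
    have hw : c ^ ((6 - p) / 4) ≠ 0 := (Real.rpow_pos_of_pos hc _).ne'
    have huv : A ^ (1 - s / 2) * A ^ (s / 2) = A := by
      rw [← Real.rpow_add hA]; norm_num
    rw [eq_comm, Real.rpow_neg hc.le, eq_div_iff hdenD.ne']
    have expand : K * A ^ (1 - s / 2) * (c ^ ((6 - p) / 4))⁻¹
          * (a * s * (s - 1) * (K_GN * A ^ (s / 2) * c ^ ((6 - p) / 4)))
        = (K * (a * s * (s - 1) * K_GN)) * (A ^ (1 - s / 2) * A ^ (s / 2))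
          * ((c ^ ((6 - p) / 4))⁻¹ * c ^ ((6 - p) / 4)) := by ring
    rw [expand, huv, inv_mul_cancel₀ hw, mul_one, hKdef,
      div_mul_cancel₀ _ (mul_pos hass1 hKGN).ne']
  -- compute base2 ^ (1/(s-2))
  have hpow2 : (p * A / (a * s * (s - 1) * (K_GN * A ^ (s / 2) * c ^ ((6 - p) / 4)))) ^ (1 / (s - 2))
      = K ^ (1 / (s - 2)) * A ^ (-(1:ℝ)/2) * c ^ ((p - 6) / (2 * (3 * p - 10))) := by
    rw [hbase2eq,
      Real.mul_rpow (mul_nonneg hK.le (Real.rpow_nonneg hA.le _)) (Real.rpow_nonneg hc.le _),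
      Real.mul_rpow hK.le (Real.rpow_nonneg hA.le _),
      ← Real.rpow_mul hA.le, ← Real.rpow_mul hc.le,
      show (1 - s / 2) * (1 / (s - 2)) = -(1:ℝ)/2 by
        rw [mul_one_div, div_eq_div_iff hs2' two_ne_zero]; ring,
      show -((6 - p) / 4) * (1 / (s - 2)) = (p - 6) / (2 * (3 * p - 10)) by
        rw [hs2val, mul_one_div,
          div_eq_div_iff (div_ne_zero h310' two_ne_zero) (mul_ne_zero two_ne_zero h310')]
        ring]
  -- main strict inequality
  have hmain : γ / 4 * K_H * c ^ (4 * (p - 3) / (3 * p - 10))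
      < K ^ (1 / (s - 2)) * (s - 2) / (s - 1) := by
    have h := mul_lt_mul_of_pos_left hcq (show (0:ℝ) < γ * K_H / 4 by positivity)
    calc γ / 4 * K_H * c ^ (4 * (p - 3) / (3 * p - 10))
        = γ * K_H / 4 * c ^ (4 * (p - 3) / (3 * p - 10)) := by ring
      _ < γ * K_H / 4 * (X * K ^ (1 / (s - 2))) := h
      _ = K ^ (1 / (s - 2)) * (s - 2) / (s - 1) := by
          rw [hXdef]
          field_simp [hγ.ne', hKH.ne', hs1']
  -- exponent/rpow bookkeeping
  have hA12 : Real.sqrt A = A ^ ((1:ℝ)/2) := Real.sqrt_eq_rpow A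
  have hcsplit : c ^ ((3:ℝ)/2)
      = c ^ (4 * (p - 3) / (3 * p - 10)) * c ^ ((p - 6) / (2 * (3 * p - 10))) := by
    rw [← Real.rpow_add hc]
    congr 1
    rw [div_add_div _ _ h310' (mul_ne_zero two_ne_zero h310'),
      div_eq_div_iff (two_ne_zero) (mul_pos h310 (mul_pos two_pos h310)).ne']
    ring
  have hAsplit : A ^ (-(1:ℝ)/2) * A = A ^ ((1:ℝ)/2) := by
    nth_rewrite 2 [← Real.rpow_one A]
    rw [← Real.rpow_add hA]
    norm_num
  -- chain
  have hchain : γ / 4 * B < tstar * A * (s - 2) / (s - 1) := by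
    have hpos1 : 0 < A ^ ((1:ℝ)/2) * c ^ ((p - 6) / (2 * (3 * p - 10))) := by positivity
    have step1 : γ / 4 * B ≤ γ / 4 * (K_H * Real.sqrt A * c ^ ((3:ℝ)/2)) :=
      mul_le_mul_of_nonneg_left hHardy (by positivity)
    have step2 : γ / 4 * (K_H * Real.sqrt A * c ^ ((3:ℝ)/2))
        = (γ / 4 * K_H * c ^ (4 * (p - 3) / (3 * p - 10)))
          * (A ^ ((1:ℝ)/2) * c ^ ((p - 6) / (2 * (3 * p - 10)))) := by
      rw [hA12, hcsplit]; ring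
    have step3 : (γ / 4 * K_H * c ^ (4 * (p - 3) / (3 * p - 10)))
          * (A ^ ((1:ℝ)/2) * c ^ ((p - 6) / (2 * (3 * p - 10))))
        < (K ^ (1 / (s - 2)) * (s - 2) / (s - 1))
          * (A ^ ((1:ℝ)/2) * c ^ ((p - 6) / (2 * (3 * p - 10)))) :=
      mul_lt_mul_of_pos_right hmain hpos1
    have step4 : (K ^ (1 / (s - 2)) * (s - 2) / (s - 1))
          * (A ^ ((1:ℝ)/2) * c ^ ((p - 6) / (2 * (3 * p - 10))))
        ≤ tstar * A * (s - 2) / (s - 1) := by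
      have h5 : K ^ (1 / (s - 2)) * A ^ ((1:ℝ)/2) * c ^ ((p - 6) / (2 * (3 * p - 10)))
          ≤ tstar * A := by
        calc K ^ (1 / (s - 2)) * A ^ ((1:ℝ)/2) * c ^ ((p - 6) / (2 * (3 * p - 10)))
            = (K ^ (1 / (s - 2)) * A ^ (-(1:ℝ)/2) * c ^ ((p - 6) / (2 * (3 * p - 10)))) * A := by
              rw [← hAsplit]; ring
          _ ≤ tstar * A := by
              rw [← hpow2]
              exact mul_le_mul_of_nonneg_right hTlb hA.le
      have hfac : 0 < (s - 2) / (s - 1) := div_pos (by linarith) (by linarith)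
      calc (K ^ (1 / (s - 2)) * (s - 2) / (s - 1))
            * (A ^ ((1:ℝ)/2) * c ^ ((p - 6) / (2 * (3 * p - 10))))
          = (K ^ (1 / (s - 2)) * A ^ ((1:ℝ)/2) * c ^ ((p - 6) / (2 * (3 * p - 10))))
            * ((s - 2) / (s - 1)) := by ring
        _ ≤ (tstar * A) * ((s - 2) / (s - 1)) :=
            mul_le_mul_of_nonneg_right h5 hfac.le
        _ = tstar * A * (s - 2) / (s - 1) := by ring
    calc γ / 4 * B ≤ _ := step1
      _ = _ := step2
      _ < _ := step3
      _ ≤ _ := step4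
  -- conclude
  rw [hlast]
  have heq : tstar * A - tstar * A / (s - 1) = tstar * A * (s - 2) / (s - 1) := by
    rw [eq_div_iff hs1', sub_mul, div_mul_cancel₀ _ hs1']
    ring
  linarith
end

section
/- Let γ > 0, a > 0, p ∈ (10/3, 6], σ = 3(p−2)/2, c ∈ (0, c₁), and A, B, C > 0 with B ≤ K_H √A c^{3/2} and C ≤ K_GN A^{σ/2} c^{(6−p)/4}. Define g(t) = (1/2)t²A − (γ/4)tB − (a/p)t^σ C. Then there exist unique 0 < s⁺ < t* < s⁻ such that g'(s⁺) = g'(s⁻) = 0, with g''(s⁺) > 0 and g''(s⁻) < 0; moreover s⁺ is the unique local minimum point and s⁻ the unique local maximum point of g on (0, ∞). -/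
open Real Set

lemma fiber_struct (A β μ σ : ℝ) (hA : 0 < A) (hβ : 0 < β) (hμ : 0 < μ) (hσ : 2 < σ)
    (tstar : ℝ) (hts : 0 < tstar) (hts_pow : tstar ^ (σ - 2) = A / (μ * (σ - 1)))
    (g g' g'' : ℝ → ℝ)
    (hgdef : ∀ t, g t = (1/2) * t^2 * A - β * t - (μ / σ) * t ^ σ)
    (hg'def : ∀ t, g' t = t * A - β - μ * t ^ (σ-1))
    (hg''def : ∀ t, g'' t = A - μ * (σ-1) * t ^ (σ-2))
    (hgts : 0 < g' tstar) :
    ∃ splus sminus : ℝ,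
      0 < splus ∧ splus < tstar ∧ tstar < sminus ∧
      g' splus = 0 ∧ g' sminus = 0 ∧ 0 < g'' splus ∧ g'' sminus < 0 ∧
      IsLocalMin g splus ∧ IsLocalMax g sminus ∧
      (∀ t : ℝ, 0 < t → g' t = 0 → t = splus ∨ t = sminus) ∧
      (∀ t : ℝ, 0 < t → IsLocalMin g t → t = splus) ∧
      (∀ t : ℝ, 0 < t → IsLocalMax g t → t = sminus) := by
  have hσ1 : (1:ℝ) < σ - 1 := by linarith
  have hσ2 : (0:ℝ) < σ - 2 := by linarith
  have hσ0 : (0:ℝ) < σ := by linarith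
  -- derivative facts
  have hDg : ∀ t : ℝ, HasDerivAt g (g' t) t := by
    intro t
    rw [hg'def]
    have h1 : HasDerivAt (fun t : ℝ => t ^ σ) (σ * t ^ (σ - 1)) t :=
      Real.hasDerivAt_rpow_const (Or.inr (by linarith))
    have h2 : HasDerivAt (fun t : ℝ => (1/2) * t^2 * A) (t * A) t := by
      have := ((hasDerivAt_pow 2 t).const_mul (1/2 : ℝ)).mul_const A
      refine this.congr_deriv ?_; push_cast; ring
    have h3 : HasDerivAt (fun t : ℝ => β * t) β t := by
      simpa using (hasDerivAt_id t).const_mul β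
    have h4 : HasDerivAt (fun t : ℝ => (μ / σ) * t ^ σ) (μ * t ^ (σ - 1)) t := by
      have h5 := h1.const_mul (μ / σ)
      have : μ / σ * (σ * t ^ (σ - 1)) = μ * t ^ (σ - 1) := by field_simp
      rw [this] at h5; exact h5
    exact ((h2.sub h3).sub h4).congr_of_eventuallyEq
      (Filter.Eventually.of_forall fun x => hgdef x)
  have hDg' : ∀ t : ℝ, HasDerivAt g' (g'' t) t := by
    intro t
    rw [hg''def]
    have h1 : HasDerivAt (fun t : ℝ => t ^ (σ-1)) ((σ-1) * t ^ (σ - 1 - 1)) t :=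
      Real.hasDerivAt_rpow_const (Or.inr (by linarith))
    have h2 : HasDerivAt (fun t : ℝ => t * A) A t := by
      simpa using (hasDerivAt_id t).mul_const A
    have h4 : HasDerivAt (fun t : ℝ => μ * t ^ (σ-1)) (μ * (σ-1) * t ^ (σ-2)) t := by
      have h5 := h1.const_mul μ
      rw [show σ - 1 - 1 = σ - 2 by ring, ← mul_assoc] at h5; exact h5
    exact ((h2.sub_const β).sub h4).congr_of_eventuallyEq
      (Filter.Eventually.of_forall fun x => hg'def x)
  have hgc : Continuous g' := by
    have : Differentiable ℝ g' := fun t => (hDg' t).differentiableAt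
    exact this.continuous
  -- g'' : strictly decreasing on Ici 0, zero at tstar
  have hg''ts : g'' tstar = 0 := by
    rw [hg''def, hts_pow]
    field_simp
    ring
  have hg''anti : StrictAntiOn g'' (Ici 0) := by
    intro x hx y hy hxy
    rw [hg''def, hg''def]
    have : x ^ (σ-2) < y ^ (σ-2) := Real.rpow_lt_rpow hx hxy hσ2
    have hc : 0 < μ * (σ - 1) := by positivity
    nlinarith [this]
  have hts0 : tstar ∈ Ici (0:ℝ) := le_of_lt hts
  -- g' strictly increasing on [0,tstar], strictly decreasing on [tstar,∞)
  have hg'mono : StrictMonoOn g' (Icc 0 tstar) := by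
    apply strictMonoOn_of_deriv_pos (convex_Icc _ _) hgc.continuousOn
    intro t ht
    rw [interior_Icc] at ht
    rw [(hDg' t).deriv]
    have := hg''anti (le_of_lt ht.1) hts0 ht.2
    linarith [hg''ts]
  have hg'anti : StrictAntiOn g' (Ici tstar) := by
    apply strictAntiOn_of_deriv_neg (convex_Ici _) hgc.continuousOn
    intro t ht
    rw [interior_Ici] at ht
    rw [(hDg' t).deriv]
    have := hg''anti hts0 (le_of_lt (lt_trans hts ht)) ht
    linarith [hg''ts]
  -- a small point where g' < 0
  set t0 : ℝ := min (tstar/2) (β/(2*A)) with ht0def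
  have ht0pos : 0 < t0 := lt_min (by linarith) (by positivity)
  have ht0lt : t0 < tstar := lt_of_le_of_lt (min_le_left _ _) (by linarith)
  have hg't0 : g' t0 < 0 := by
    rw [hg'def]
    have h1 : t0 ≤ β/(2*A) := min_le_right _ _
    have h2 : t0 * A ≤ β/2 := by
      have h2a := mul_le_mul_of_nonneg_right h1 (le_of_lt hA)
      have h2b : β/(2*A) * A = β/2 := by field_simp
      linarith
    have h3 : 0 ≤ μ * t0 ^ (σ-1) := by positivity
    linarith
  -- a large point where g' < 0
  set t1 : ℝ := (2*(σ-1)) ^ ((1:ℝ)/(σ-2)) * tstar with ht1def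
  have h2σ : (1:ℝ) < 2*(σ-1) := by linarith
  have hkgt1 : (1:ℝ) < (2*(σ-1)) ^ ((1:ℝ)/(σ-2)) :=
    Real.one_lt_rpow_iff_of_pos (by linarith) |>.mpr (Or.inl ⟨h2σ, by positivity⟩)
  have ht1gt : tstar < t1 := by
    rw [ht1def]; nlinarith
  have ht1pos : 0 < t1 := lt_trans hts ht1gt
  have ht1pow : t1 ^ (σ - 2) = 2 * A / μ := by
    rw [ht1def, Real.mul_rpow (by positivity) (le_of_lt hts),
      ← Real.rpow_mul (by positivity : (0:ℝ) ≤ 2*(σ-1)),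
      one_div_mul_cancel (ne_of_gt hσ2), Real.rpow_one, hts_pow]
    field_simp
  have hg't1 : g' t1 < 0 := by
    rw [hg'def]
    have he : σ - 1 = 1 + (σ - 2) := by ring
    have : t1 ^ (σ - 1) = t1 * t1 ^ (σ - 2) := by
      rw [he, Real.rpow_add ht1pos, Real.rpow_one]
    rw [this, ht1pow]
    have : μ * (t1 * (2 * A / μ)) = 2 * t1 * A := by field_simp
    rw [this]
    nlinarith
  -- existence of the two zeros
  obtain ⟨splus, hspmem, hsp0⟩ := intermediate_value_Ioo (le_of_lt ht0lt)
    hgc.continuousOn (show (0:ℝ) ∈ Ioo (g' t0) (g' tstar) from ⟨hg't0, hgts⟩)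
  obtain ⟨sminus, hsmmem, hsm0⟩ := intermediate_value_Ioo' (le_of_lt ht1gt)
    hgc.continuousOn (show (0:ℝ) ∈ Ioo (g' t1) (g' tstar) from ⟨hg't1, hgts⟩)
  have hsppos : 0 < splus := lt_trans ht0pos hspmem.1
  have hsplt : splus < tstar := hspmem.2
  have hsmgt : tstar < sminus := hsmmem.1
  have hspmem' : splus ∈ Icc (0:ℝ) tstar := ⟨le_of_lt hsppos, le_of_lt hsplt⟩
  have hsmmem' : sminus ∈ Ici tstar := le_of_lt hsmgt
  have hsmpos : 0 < sminus := lt_trans hts hsmgt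
  have hspsm : splus < sminus := lt_trans hsplt hsmgt
  -- second derivative signs
  have hg''sp : 0 < g'' splus := by
    have := hg''anti (le_of_lt hsppos) hts0 hsplt
    linarith [hg''ts]
  have hg''sm : g'' sminus < 0 := by
    have := hg''anti hts0 (le_of_lt hsmpos) hsmgt
    linarith [hg''ts]
  -- monotonicity of g on the three regions
  have hgC : Continuous g := Differentiable.continuous (fun t => (hDg t).differentiableAt)
  have hganti1 : StrictAntiOn g (Icc 0 splus) := by
    apply strictAntiOn_of_deriv_neg (convex_Icc _ _) hgC.continuousOn
    intro t ht
    rw [interior_Icc] at ht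
    rw [(hDg t).deriv]
    have := hg'mono ⟨le_of_lt ht.1, le_of_lt (lt_trans ht.2 hsplt)⟩ hspmem' ht.2
    linarith [hsp0]
  have hgmono : StrictMonoOn g (Icc splus sminus) := by
    apply strictMonoOn_of_deriv_pos (convex_Icc _ _) hgC.continuousOn
    intro t ht
    rw [interior_Icc] at ht
    rw [(hDg t).deriv]
    rcases le_or_gt t tstar with h | h
    · have := hg'mono hspmem' ⟨le_of_lt (lt_trans hsppos ht.1), h⟩ ht.1
      linarith [hsp0]
    · have := hg'anti (le_of_lt h) hsmmem' ht.2
      linarith [hsm0]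
  have hganti2 : StrictAntiOn g (Ici sminus) := by
    apply strictAntiOn_of_deriv_neg (convex_Ici _) hgC.continuousOn
    intro t ht
    rw [interior_Ici] at ht
    rw [(hDg t).deriv]
    have := hg'anti hsmmem' (le_of_lt (lt_trans hsmgt ht)) ht
    linarith [hsm0]
  -- local min / max
  have hlmin : IsLocalMin g splus := by
    have hmem : Ioo (0:ℝ) sminus ∈ nhds splus := Ioo_mem_nhds hsppos hspsm
    filter_upwards [hmem] with t ht
    rcases le_total t splus with h | h
    · exact hganti1.antitoneOn ⟨le_of_lt ht.1, h⟩ ⟨le_of_lt hsppos, le_refl _⟩ h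
    · exact hgmono.monotoneOn ⟨le_refl _, le_of_lt hspsm⟩ ⟨h, le_of_lt ht.2⟩ h
  have hlmax : IsLocalMax g sminus := by
    have hmem : Ioi splus ∈ nhds sminus := Ioi_mem_nhds hspsm
    filter_upwards [hmem] with t ht
    rcases le_total t sminus with h | h
    · exact hgmono.monotoneOn ⟨le_of_lt ht, h⟩ ⟨le_of_lt hspsm, le_refl _⟩ h
    · exact hganti2.antitoneOn (Set.mem_Ici.mpr (le_refl sminus)) h h
  -- uniqueness of critical points
  have huniq : ∀ t : ℝ, 0 < t → g' t = 0 → t = splus ∨ t = sminus := by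
    intro t ht hgt
    rcases lt_trichotomy t tstar with h | h | h
    · left
      exact hg'mono.injOn ⟨le_of_lt ht, le_of_lt h⟩ hspmem' (by rw [hgt, hsp0])
    · exfalso; rw [h] at hgt; linarith
    · right
      exact hg'anti.injOn (le_of_lt h) hsmmem' (by rw [hgt, hsm0])
  refine ⟨splus, sminus, hsppos, hsplt, hsmgt, hsp0, hsm0, hg''sp, hg''sm, hlmin, hlmax,
    huniq, ?_, ?_⟩
  · intro t ht hmin
    have hz : g' t = 0 := by
      have := hmin.deriv_eq_zero
      rwa [(hDg t).deriv] at this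
    rcases huniq t ht hz with h | h
    · exact h
    · exfalso
      subst h
      have h1 : ∀ᶠ x in nhdsWithin t (Iio t), g t ≤ g x :=
        hmin.filter_mono nhdsWithin_le_nhds
      have h2 : Ioo splus t ∈ nhdsWithin t (Iio t) :=
        Ioo_mem_nhdsLT_of_mem ⟨hspsm, le_refl _⟩
      obtain ⟨x, hx1, hx2⟩ := (h1.and (Filter.eventually_mem_set.mpr h2)).exists
      have : g x < g t := hgmono ⟨le_of_lt hx2.1, le_of_lt hx2.2⟩
        ⟨le_of_lt hspsm, le_refl _⟩ hx2.2
      linarith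
  · intro t ht hmax
    have hz : g' t = 0 := by
      have := hmax.deriv_eq_zero
      rwa [(hDg t).deriv] at this
    rcases huniq t ht hz with h | h
    · exfalso
      subst h
      have h1 : ∀ᶠ x in nhdsWithin t (Ioi t), g x ≤ g t :=
        hmax.filter_mono nhdsWithin_le_nhds
      have h2 : Ioo t sminus ∈ nhdsWithin t (Ioi t) :=
        Ioo_mem_nhdsGT_of_mem ⟨le_refl _, hspsm⟩
      obtain ⟨x, hx1, hx2⟩ := (h1.and (Filter.eventually_mem_set.mpr h2)).exists
      have : g t < g x := hgmono ⟨le_refl _, le_of_lt hspsm⟩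
        ⟨le_of_lt hx2.1, le_of_lt hx2.2⟩ hx2.1
      linarith
    · exact h

set_option maxHeartbeats 1000000 in
lemma key_pos (p γ a K_H K_GN c A B C : ℝ) (hγ : 0 < γ) (ha : 0 < a)
    (hp1 : 10 / 3 < p) (hp2 : p ≤ 6) (hKH : 0 < K_H) (hKGN : 0 < K_GN)
    (hA : 0 < A) (hB : 0 < B) (hC : 0 < C)
    (hc : 0 < c) (hc1 : c < cOne p γ a K_H K_GN)
    (σ : ℝ) (hσdef : σ = 3 * (p - 2) / 2)
    (tstar : ℝ) (htsdef : tstar = (p * A / (a * σ * (σ - 1) * C)) ^ (1 / (σ - 2)))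
    (hHardy : B ≤ K_H * Real.sqrt A * c ^ ((3 : ℝ) / 2))
    (hGN : C ≤ K_GN * A ^ (σ / 2) * c ^ ((6 - p) / 4)) :
    0 < tstar * A - γ / 4 * B - a * σ / p * tstar ^ (σ - 1) * C := by
  have hp3 : (3:ℝ) < p := by linarith
  have h3p10 : (0:ℝ) < 3 * p - 10 := by linarith
  have hp0 : (0:ℝ) < p := by linarith
  have hσ : 2 < σ := by rw [hσdef]; linarith
  have hσ2 : (0:ℝ) < σ - 2 := by linarith
  have hσ1 : (0:ℝ) < σ - 1 := by linarith
  have hσ0 : (0:ℝ) < σ := by linarith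
  have hσ2v : σ - 2 = (3 * p - 10) / 2 := by rw [hσdef]; ring
  have hp3ne : p - 3 ≠ 0 := by linarith
  have h3p10ne : (3:ℝ) * p - 10 ≠ 0 := by linarith
  -- abbreviations (opaque)
  obtain ⟨Mv, hMvdef⟩ : ∃ x : ℝ, x = p / (a * σ * (σ - 1) * K_GN) := ⟨_, rfl⟩
  obtain ⟨Xb, hXbdef⟩ : ∃ x : ℝ, x = 4 * (σ - 2) / (γ * K_H * (σ - 1)) := ⟨_, rfl⟩
  obtain ⟨q, hqdef⟩ : ∃ x : ℝ, x = (p - 6) / 4 * (1 / (σ - 2)) := ⟨_, rfl⟩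
  have hMv : 0 < Mv := by rw [hMvdef]; positivity
  have hXb : 0 < Xb := by rw [hXbdef]; positivity
  -- the exponent e = 3/2 - q
  have hq : q = (p - 6) / (2 * (3 * p - 10)) := by
    rw [hqdef, hσ2v]; field_simp; ring
  have he_eq : (3:ℝ)/2 - q = 4 * (p - 3) / (3 * p - 10) := by
    rw [hq]; field_simp; ring
  have he_pos : (0:ℝ) < 3/2 - q := by
    have h1 : q ≤ 0 := by
      rw [hq]
      apply div_nonpos_of_nonpos_of_nonneg <;> nlinarith
    linarith
  -- c₁ ^ e
  have hc1e : (cOne p γ a K_H K_GN) ^ ((3:ℝ)/2 - q) = Xb * Mv ^ ((1:ℝ)/(σ - 2)) := by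
    have hcdef : cOne p γ a K_H K_GN
        = Xb ^ ((3 * p - 10) / (4 * (p - 3))) * Mv ^ (1 / (2 * (p - 3))) := by
      rw [hMvdef, hXbdef, hσdef]; rfl
    rw [hcdef, Real.mul_rpow (by positivity) (by positivity),
      ← Real.rpow_mul hXb.le, ← Real.rpow_mul hMv.le,
      show (3 * p - 10) / (4 * (p - 3)) * ((3:ℝ)/2 - q) = 1 from by
        rw [he_eq]; field_simp,
      show (1:ℝ) / (2 * (p - 3)) * ((3:ℝ)/2 - q) = 1/(σ - 2) from by
        rw [he_eq, hσ2v]; field_simp; ring,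
      Real.rpow_one]
  have hce : c ^ ((3:ℝ)/2 - q) < Xb * Mv ^ ((1:ℝ)/(σ - 2)) := by
    rw [← hc1e]; exact Real.rpow_lt_rpow hc.le hc1 he_pos
  -- lower bound for tstar
  have hX : 0 < p * A / (a * σ * (σ - 1) * C) := by positivity
  have hts : 0 < tstar := by rw [htsdef]; positivity
  have hts_pow : tstar ^ (σ - 2) = p * A / (a * σ * (σ - 1) * C) := by
    rw [htsdef, ← Real.rpow_mul hX.le, one_div_mul_cancel (ne_of_gt hσ2), Real.rpow_one]
  have hZX : Mv * A ^ ((1:ℝ) - σ/2) * c ^ ((p - 6) / 4) ≤ p * A / (a * σ * (σ - 1) * C) := by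
    rw [le_div_iff₀ (by positivity)]
    have h1 : A ^ ((1:ℝ) - σ/2) * A ^ (σ/2) = A := by
      rw [← Real.rpow_add hA, show (1:ℝ) - σ/2 + σ/2 = 1 by ring, Real.rpow_one]
    have h2 : c ^ ((p-6)/4) * c ^ ((6-p)/4) = 1 := by
      rw [← Real.rpow_add hc, show (p-6)/4 + (6-p)/4 = (0:ℝ) by ring, Real.rpow_zero]
    have h4 : Mv * (a * σ * (σ - 1) * K_GN) = p := by
      rw [hMvdef]; field_simp
    have h3 := mul_le_mul_of_nonneg_left hGN
      (show (0:ℝ) ≤ Mv * A ^ ((1:ℝ) - σ/2) * c ^ ((p-6)/4) * (a * σ * (σ - 1)) by positivity)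
    have h5 : Mv * A ^ ((1:ℝ) - σ/2) * c ^ ((p-6)/4) * (a * σ * (σ - 1))
          * (K_GN * A ^ (σ/2) * c ^ ((6-p)/4))
        = (Mv * (a * σ * (σ - 1) * K_GN)) * (A ^ ((1:ℝ) - σ/2) * A ^ (σ/2))
          * (c ^ ((p-6)/4) * c ^ ((6-p)/4)) := by ring
    rw [h4, h1, h2] at h5
    linarith [h3, h5.le, h5.ge]
  have hts_lb1 : (Mv * A ^ ((1:ℝ) - σ/2) * c ^ ((p - 6) / 4)) ^ ((1:ℝ) / (σ - 2)) ≤ tstar := by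
    rw [htsdef]
    exact Real.rpow_le_rpow (by positivity) hZX (by positivity)
  have hYpow : (Mv * A ^ ((1:ℝ) - σ/2) * c ^ ((p - 6) / 4)) ^ ((1:ℝ) / (σ - 2))
      = Mv ^ ((1:ℝ) / (σ - 2)) * A ^ (-(1:ℝ) / 2) * c ^ q := by
    rw [Real.mul_rpow (by positivity) (by positivity),
      Real.mul_rpow (by positivity) (by positivity),
      ← Real.rpow_mul hA.le, ← Real.rpow_mul hc.le,
      show ((1:ℝ) - σ / 2) * (1 / (σ - 2)) = -(1:ℝ) / 2 from by
        field_simp; ring,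
      show ((p:ℝ) - 6) / 4 * (1 / (σ - 2)) = q from hqdef.symm]
  have hTL : Mv ^ ((1:ℝ) / (σ - 2)) * A ^ (-(1:ℝ) / 2) * c ^ q ≤ tstar := by
    rw [← hYpow]; exact hts_lb1
  -- the main chain
  obtain ⟨P, hPdef⟩ : ∃ x : ℝ, x = A ^ ((1:ℝ)/2) := ⟨_, rfl⟩
  obtain ⟨Q, hQdef⟩ : ∃ x : ℝ, x = c ^ q := ⟨_, rfl⟩
  obtain ⟨R, hRdef⟩ : ∃ x : ℝ, x = c ^ ((3:ℝ)/2 - q) := ⟨_, rfl⟩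
  obtain ⟨W, hWdef⟩ : ∃ x : ℝ, x = Mv ^ ((1:ℝ) / (σ - 2)) := ⟨_, rfl⟩
  have hP : 0 < P := by rw [hPdef]; positivity
  have hQ : 0 < Q := by rw [hQdef]; positivity
  have hR : 0 < R := by rw [hRdef]; positivity
  have hW : 0 < W := by rw [hWdef]; positivity
  have hPA : Real.sqrt A = P := by rw [hPdef]; exact Real.sqrt_eq_rpow A
  have hRQ : c ^ ((3:ℝ) / 2) = R * Q := by
    rw [hRdef, hQdef, ← Real.rpow_add hc]; ring_nf
  have hAP : A ^ (-(1:ℝ) / 2) * A = P := by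
    nth_rewrite 2 [← Real.rpow_one A]
    rw [hPdef, ← Real.rpow_add hA]
    norm_num
  have hB' : B ≤ K_H * P * (R * Q) := by
    rw [← hPA, ← hRQ]; exact hHardy
  have hce' : R < Xb * W := by rw [hRdef, hWdef]; exact hce
  have hTL' : W * A ^ (-(1:ℝ) / 2) * Q ≤ tstar := by rw [hWdef, hQdef]; exact hTL
  have step1 : γ / 4 * B * (σ - 1) ≤ γ / 4 * (σ - 1) * K_H * (P * Q) * R := by
    have h := mul_le_mul_of_nonneg_left hB' (show (0:ℝ) ≤ γ / 4 * (σ - 1) by positivity)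
    linarith [h]
  have step2 : γ / 4 * (σ - 1) * K_H * (P * Q) * R
      < γ / 4 * (σ - 1) * K_H * (P * Q) * (Xb * W) := by
    have h := mul_lt_mul_of_pos_left hce'
      (show (0:ℝ) < γ / 4 * (σ - 1) * K_H * (P * Q) by positivity)
    linarith [h]
  have step3 : γ / 4 * (σ - 1) * K_H * (P * Q) * (Xb * W)
      = (σ - 2) * W * (P * Q) := by
    have hXbmul : γ * K_H * (σ - 1) * Xb = 4 * (σ - 2) := by
      rw [hXbdef, mul_comm, div_mul_cancel₀ _ (by positivity : γ * K_H * (σ - 1) ≠ 0)]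
    linear_combination (P * Q * W / 4) * hXbmul
  have step4 : (σ - 2) * W * (P * Q) ≤ tstar * A * (σ - 2) := by
    have h := mul_le_mul_of_nonneg_right hTL' (show (0:ℝ) ≤ A * (σ - 2) by positivity)
    have heq2 : W * A ^ (-(1:ℝ) / 2) * Q * (A * (σ - 2))
        = (σ - 2) * W * ((A ^ (-(1:ℝ) / 2) * A) * Q) := by ring
    rw [hAP] at heq2
    linarith [h, heq2.le, heq2.ge]
  have hmain : γ / 4 * B * (σ - 1) < tstar * A * (σ - 2) := by
    linarith [step1, step2, step3.le, step4]
  -- conclude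
  have h5 : tstar ^ (σ - 1) = tstar * (p * A / (a * σ * (σ - 1) * C)) := by
    rw [show σ - 1 = 1 + (σ - 2) by ring, Real.rpow_add hts, Real.rpow_one, hts_pow]; ring_nf
  have h6 : a * σ / p * tstar ^ (σ - 1) * C = tstar * A / (σ - 1) := by
    rw [h5]; field_simp
  rw [h6]
  have h7 : tstar * A - γ / 4 * B - tstar * A / (σ - 1)
      = (tstar * A * (σ - 2) - γ / 4 * B * (σ - 1)) / (σ - 1) := by
    field_simp; ring
  rw [h7]
  exact div_pos (by linarith) hσ1

/-- Lemma 6: for `c ∈ (0,c₁)` the fiber map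
`g(t) = (1/2)t²A − (γ/4)tB − (a/p)t^σ C` admits unique critical points
`0 < s⁺ < t* < s⁻` with `g''(s⁺) > 0`, `g''(s⁻) < 0`; `s⁺` is the unique local
minimum point and `s⁻` the unique local maximum point of `g` on `(0,∞)`. -/
theorem stmt8 (p γ a K_H K_GN c A B C : ℝ) (hγ : 0 < γ) (ha : 0 < a)
    (hp1 : 10 / 3 < p) (hp2 : p ≤ 6) (hKH : 0 < K_H) (hKGN : 0 < K_GN)
    (hA : 0 < A) (hB : 0 < B) (hC : 0 < C)
    (hc : 0 < c) (hc1 : c < cOne p γ a K_H K_GN)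
    (hHardy : B ≤ K_H * Real.sqrt A * c ^ ((3 : ℝ) / 2))
    (hGN : C ≤ K_GN * A ^ (sig p / 2) * c ^ ((6 - p) / 4)) :
    let σ : ℝ := sig p
    let tstar : ℝ := (p * A / (a * σ * (σ - 1) * C)) ^ (1 / (σ - 2))
    let g : ℝ → ℝ := fun t => (1 / 2) * t ^ 2 * A - (γ / 4) * t * B - (a / p) * t ^ σ * C
    let g' : ℝ → ℝ := fun t => t * A - (γ / 4) * B - (a * σ / p) * t ^ (σ - 1) * C
    let g'' : ℝ → ℝ := fun t => A - (a * σ * (σ - 1) / p) * t ^ (σ - 2) * C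
    ∃ splus sminus : ℝ,
      0 < splus ∧ splus < tstar ∧ tstar < sminus ∧
      g' splus = 0 ∧ g' sminus = 0 ∧ 0 < g'' splus ∧ g'' sminus < 0 ∧
      IsLocalMin g splus ∧ IsLocalMax g sminus ∧
      (∀ t : ℝ, 0 < t → g' t = 0 → t = splus ∨ t = sminus) ∧
      (∀ t : ℝ, 0 < t → IsLocalMin g t → t = splus) ∧
      (∀ t : ℝ, 0 < t → IsLocalMax g t → t = sminus) := by
  intro σ tstar g g' g''
  have hσdef : σ = 3 * (p - 2) / 2 := rfl
  have htsdef : tstar = (p * A / (a * σ * (σ - 1) * C)) ^ (1 / (σ - 2)) := rfl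
  have hp0 : (0:ℝ) < p := by linarith
  have hσ : 2 < σ := by rw [hσdef]; linarith
  have hσ2 : (0:ℝ) < σ - 2 := by linarith
  have hσ1 : (0:ℝ) < σ - 1 := by linarith
  have hσ0 : (0:ℝ) < σ := by linarith
  have hX : 0 < p * A / (a * σ * (σ - 1) * C) := by
    apply div_pos (mul_pos hp0 hA)
    exact mul_pos (mul_pos (mul_pos ha hσ0) hσ1) hC
  have hts : 0 < tstar := by rw [htsdef]; exact Real.rpow_pos_of_pos hX _
  have hts_pow0 : tstar ^ (σ - 2) = p * A / (a * σ * (σ - 1) * C) := by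
    rw [htsdef, ← Real.rpow_mul hX.le, one_div_mul_cancel (ne_of_gt hσ2), Real.rpow_one]
  have hgts : 0 < g' tstar := by
    have := key_pos p γ a K_H K_GN c A B C hγ ha hp1 hp2 hKH hKGN hA hB hC hc hc1
      σ hσdef tstar htsdef hHardy hGN
    show 0 < tstar * A - (γ / 4) * B - (a * σ / p) * tstar ^ (σ - 1) * C
    linarith
  apply fiber_struct A (γ / 4 * B) (a * σ / p * C) σ hA (by positivity)
    (mul_pos (div_pos (mul_pos ha hσ0) hp0) hC) hσ tstar hts
  · rw [hts_pow0]
    field_simp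
  · intro t
    show (1 / 2) * t ^ 2 * A - (γ / 4) * t * B - (a / p) * t ^ σ * C = _
    field_simp
  · intro t
    show t * A - (γ / 4) * B - (a * σ / p) * t ^ (σ - 1) * C = _
    ring
  · intro t
    show A - (a * σ * (σ - 1) / p) * t ^ (σ - 2) * C = _
    ring
  · exact hgts
end
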